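/- arXiv:2303.11217 — 2 statements merged into one kernel-verified Lean document; each statement's English description precedes it below -/
import Mathlib

section
/- Let A ∈ ℝ^{m×n}, σ, γ > 0, and let λ_min ≥ 0 be the smallest eigenvalue of AᵀA. Then the linear map v ↦ (AᵀA + (σ²/γ²)I)⁻¹ ((σ²/γ²) v) has operator norm at most σ²/(γ²λ_min + σ²). Consequently, if D : ℝⁿ → ℝⁿ is L-Lipschitz, then the map T(x) = (AᵀA + (σ²/γ²)I)⁻¹(Aᵀy + (σ²/γ²)D(x)) is (σ²L/(γ²λ_min + σ²))-Lipschitz. -/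
open Matrix

def toE {k : ℕ} (v : Fin k → ℝ) : EuclideanSpace ℝ (Fin k) := WithLp.toLp 2 v
def ofE {k : ℕ} (v : EuclideanSpace ℝ (Fin k)) : Fin k → ℝ := v

open scoped ComplexOrder

/-! If `λ_min` bounds the spectrum of the symmetric matrix `M` from below and `a = λ_min + c > 0`,
then `M + cI - aI` is positive semidefinite, so `B = M + cI` is coercive: `a‖w‖² ≤ ⟪w, Bw⟫`.
For `w = B⁻¹v` Cauchy–Schwarz turns this into `a‖w‖ ≤ ‖v‖`, i.e. `‖B⁻¹‖ ≤ 1/a`. With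
`c = σ²/γ²` this gives the contraction factor `c/(λ_min + c) = σ²/(γ²λ_min + σ²)`, and `T` is an
affine map composed with `D`. -/

namespace Matrix

variable {n : Type*} [Fintype n] [DecidableEq n]

theorem IsHermitian.posSemidef_sub_smul_one {𝕜 : Type*} [RCLike 𝕜] {M : Matrix n n 𝕜}
    (hM : M.IsHermitian) {μ : ℝ} (hμ : ∀ i, μ ≤ hM.eigenvalues i) :
    (M - (μ : 𝕜) • 1).PosSemidef := by
  have hshift : M - (μ : 𝕜) • 1 = Unitary.conjStarAlgAut 𝕜 _ hM.eigenvectorUnitary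
      (diagonal (RCLike.ofReal ∘ (hM.eigenvalues - fun _ ↦ μ))) := by
    conv_lhs => rw [hM.spectral_theorem]
    rw [← map_one (Unitary.conjStarAlgAut 𝕜 (Matrix n n 𝕜) hM.eigenvectorUnitary), ← map_smul,
      ← map_sub]
    congr 1
    ext i j
    by_cases h : i = j <;> simp [h, Algebra.algebraMap_eq_smul_one]
  rw [hshift, Unitary.conjStarAlgAut_apply, Unitary.isUnit_coe.posSemidef_star_right_conjugate_iff,
    posSemidef_diagonal_iff]
  intro i
  simpa using hμ i

theorem PosSemidef.norm_inv_mulVec_le {B : Matrix n n ℝ} {a : ℝ} (ha : 0 < a)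
    (hB : (B - a • 1).PosSemidef) (v : EuclideanSpace ℝ n) :
    ‖WithLp.toLp 2 (B⁻¹ *ᵥ v.ofLp)‖ ≤ ‖v‖ / a := by
  have hBunit : IsUnit B := by
    have hpd : (a • (1 : Matrix n n ℝ)).PosDef := by
      rw [smul_one_eq_diagonal]
      exact posDef_diagonal_iff.mpr fun _ ↦ ha
    simpa using (PosDef.posSemidef_add hB hpd).isUnit
  have hcoercive : ∀ w : EuclideanSpace ℝ n,
      a * ‖w‖ ^ 2 ≤ inner ℝ w (WithLp.toLp 2 (B *ᵥ w.ofLp)) := by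
    intro w
    have h := hB.dotProduct_mulVec_nonneg w.ofLp
    rw [sub_mulVec, smul_mulVec, one_mulVec, dotProduct_sub, dotProduct_smul, sub_nonneg] at h
    rw [← real_inner_self_eq_norm_sq, EuclideanSpace.inner_eq_star_dotProduct,
      EuclideanSpace.inner_eq_star_dotProduct, dotProduct_comm, dotProduct_comm (B *ᵥ _)]
    exact h
  set w := WithLp.toLp 2 (B⁻¹ *ᵥ v.ofLp)
  have hBw : WithLp.toLp 2 (B *ᵥ w.ofLp) = v := by
    simp [w, mulVec_mulVec, mul_nonsing_inv B ((isUnit_iff_isUnit_det B).mp hBunit)]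
  have hsq : a * ‖w‖ * ‖w‖ ≤ ‖v‖ * ‖w‖ := by
    calc a * ‖w‖ * ‖w‖ = a * ‖w‖ ^ 2 := by ring
      _ ≤ inner ℝ w v := hBw ▸ hcoercive w
      _ ≤ ‖w‖ * ‖v‖ := real_inner_le_norm w v
      _ = ‖v‖ * ‖w‖ := mul_comm _ _
  rw [le_div_iff₀ ha, mul_comm]
  rcases (norm_nonneg w).eq_or_lt with hw | hw
  · rw [← hw, mul_zero]
    exact norm_nonneg v
  · exact le_of_mul_le_mul_right hsq hw

theorem IsHermitian.norm_inv_add_smul_one_mulVec_le {M : Matrix n n ℝ} (hM : M.IsHermitian)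
    {μ c : ℝ} (hμ : ∀ i, μ ≤ hM.eigenvalues i) (hμc : 0 < μ + c) (v : EuclideanSpace ℝ n) :
    ‖WithLp.toLp 2 ((M + c • 1)⁻¹ *ᵥ v.ofLp)‖ ≤ ‖v‖ / (μ + c) := by
  refine PosSemidef.norm_inv_mulVec_le hμc ?_ v
  have hshift : M + c • 1 - (μ + c) • 1 = M - μ • 1 := by
    rw [add_smul]
    abel
  rw [hshift]
  exact hM.posSemidef_sub_smul_one hμ

end Matrix

theorem stmt_1_general (m n : ℕ) (A : Matrix (Fin m) (Fin n) ℝ)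
    (y : EuclideanSpace ℝ (Fin m)) (σ γ L lammin : ℝ) (hσ : 0 < σ) (hγ : 0 < γ)
    (hA : (Aᵀ * A : Matrix (Fin n) (Fin n) ℝ).IsHermitian)
    (hlam : lammin = ⨅ i, hA.eigenvalues i)
    (D : EuclideanSpace ℝ (Fin n) → EuclideanSpace ℝ (Fin n))
    (hD : LipschitzWith (Real.toNNReal L) D) :
    (∀ v : EuclideanSpace ℝ (Fin n),
        ‖toE (((Aᵀ * A + (σ ^ 2 / γ ^ 2) • (1 : Matrix (Fin n) (Fin n) ℝ))⁻¹).mulVec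
            ((σ ^ 2 / γ ^ 2) • ofE v))‖ ≤ (σ ^ 2 / (γ ^ 2 * lammin + σ ^ 2)) * ‖v‖) ∧
    LipschitzWith (Real.toNNReal (σ ^ 2 * L / (γ ^ 2 * lammin + σ ^ 2)))
      (fun x : EuclideanSpace ℝ (Fin n) =>
        toE (((Aᵀ * A + (σ ^ 2 / γ ^ 2) • (1 : Matrix (Fin n) (Fin n) ℝ))⁻¹).mulVec
          (Aᵀ.mulVec y + (σ ^ 2 / γ ^ 2) • ofE (D x)))) := by
  set c := σ ^ 2 / γ ^ 2 with hc
  set B := Aᵀ * A + c • (1 : Matrix (Fin n) (Fin n) ℝ)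
  have hlam_le : ∀ i, lammin ≤ hA.eigenvalues i := fun i ↦
    hlam ▸ ciInf_le (Finite.bddBelow_range _) i
  have hlam_nonneg : 0 ≤ lammin :=
    hlam ▸ Real.iInf_nonneg fun i ↦ eigenvalues_conjTranspose_mul_self_nonneg A i
  have hr : c / (lammin + c) = σ ^ 2 / (γ ^ 2 * lammin + σ ^ 2) := by
    rw [hc]
    field_simp
  have hbound : ∀ v, ‖toE (B⁻¹ *ᵥ (c • ofE v))‖ ≤ σ ^ 2 / (γ ^ 2 * lammin + σ ^ 2) * ‖v‖ := by
    intro v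
    have hμc : 0 < lammin + c := by positivity
    calc ‖toE (B⁻¹ *ᵥ (c • ofE v))‖ ≤ ‖c • v‖ / (lammin + c) :=
          hA.norm_inv_add_smul_one_mulVec_le hlam_le hμc (c • v)
      _ = σ ^ 2 / (γ ^ 2 * lammin + σ ^ 2) * ‖v‖ := by
          rw [norm_smul, Real.norm_of_nonneg (by positivity), ← hr]
          ring
  refine ⟨hbound, ?_⟩
  let R := (toEuclideanLin B⁻¹).comp (c • LinearMap.id)
  have hR : LipschitzWith (σ ^ 2 / (γ ^ 2 * lammin + σ ^ 2)).toNNReal R :=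
    AddMonoidHomClass.lipschitz_of_bound R _ hbound
  have hT : (fun x ↦ toE (B⁻¹ *ᵥ (Aᵀ *ᵥ y + c • ofE (D x)))) =
      fun x ↦ toE (B⁻¹ *ᵥ (Aᵀ *ᵥ y)) + R (D x) := by
    funext x
    exact congrArg toE (mulVec_add _ _ _)
  rw [hT, mul_div_right_comm, Real.toNNReal_mul (by positivity), ← zero_add (_ * _)]
  exact (LipschitzWith.const _).add (hR.comp hD)

/-- The linear map `v ↦ (AᵀA + (σ²/γ²)I)⁻¹((σ²/γ²)v)` has operator norm at most
`σ²/(γ²λ_min + σ²)` (where `λ_min` is the smallest eigenvalue of `AᵀA`); consequently, if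
`D` is `L`-Lipschitz then `T(x) = (AᵀA + (σ²/γ²)I)⁻¹(Aᵀy + (σ²/γ²)D(x))` is
`σ²L/(γ²λ_min + σ²)`-Lipschitz. -/
theorem stmt_1 (m n : ℕ) [NeZero n] (A : Matrix (Fin m) (Fin n) ℝ)
    (y : EuclideanSpace ℝ (Fin m)) (σ γ L lammin : ℝ) (hσ : 0 < σ) (hγ : 0 < γ) (hL : 0 ≤ L)
    (hA : (Aᵀ * A : Matrix (Fin n) (Fin n) ℝ).IsHermitian)
    (hlam : lammin = ⨅ i, hA.eigenvalues i)
    (D : EuclideanSpace ℝ (Fin n) → EuclideanSpace ℝ (Fin n))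
    (hD : LipschitzWith (Real.toNNReal L) D) :
    (∀ v : EuclideanSpace ℝ (Fin n),
        ‖toE (((Aᵀ * A + (σ ^ 2 / γ ^ 2) • (1 : Matrix (Fin n) (Fin n) ℝ))⁻¹).mulVec
            ((σ ^ 2 / γ ^ 2) • ofE v))‖ ≤ (σ ^ 2 / (γ ^ 2 * lammin + σ ^ 2)) * ‖v‖) ∧
    LipschitzWith (Real.toNNReal (σ ^ 2 * L / (γ ^ 2 * lammin + σ ^ 2)))
      (fun x : EuclideanSpace ℝ (Fin n) =>
        toE (((Aᵀ * A + (σ ^ 2 / γ ^ 2) • (1 : Matrix (Fin n) (Fin n) ℝ))⁻¹).mulVec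
          (Aᵀ.mulVec y + (σ ^ 2 / γ ^ 2) • ofE (D x)))) :=
  stmt_1_general m n A y σ γ L lammin hσ hγ hA hlam D hD
end

section
/- Let λ_min > 0 be the smallest eigenvalue of AᵀA, σ, γ > 0, and D : ℝⁿ → ℝⁿ be L-Lipschitz with σ²L/(γ²λ_min + σ²) < 1. Then the map T(x) = (AᵀA + (σ²/γ²)I)⁻¹(Aᵀy + (σ²/γ²)D(x)) has a unique fixed point x*, and for any starting point x₀, the iterates x_{k+1} = T(x_k) converge to x*. -/
/-!
Put `c = σ²/γ²` and `M = AᵀA + c I`. Expanding in an orthonormal eigenbasis of `AᵀA` gives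
`⟪u, M u⟫ ≥ (λ_min + c) ‖u‖²`, so by Cauchy–Schwarz `M` is invertible with
`‖M⁻¹‖ ≤ (λ_min + c)⁻¹`. Since `T x - T x' = c M⁻¹ (D x - D x')`, the map `T` is Lipschitz with
constant `c L / (λ_min + c) = σ²L / (γ²λ_min + σ²) < 1`, and Banach's fixed point theorem applies.
-/

open Matrix

open scoped RealInnerProductSpace

theorem mul_norm_le_norm_of_mul_norm_sq_le_inner {E : Type*} [NormedAddCommGroup E]
    [InnerProductSpace ℝ E] {f : E → E} {μ : ℝ} {u : E} (h : μ * ‖u‖ ^ 2 ≤ ⟪u, f u⟫) :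
    μ * ‖u‖ ≤ ‖f u‖ := by
  rcases (norm_nonneg u).eq_or_lt with hu | hu
  · simp [← hu]
  · refine le_of_mul_le_mul_right ?_ hu
    calc μ * ‖u‖ * ‖u‖ = μ * ‖u‖ ^ 2 := by ring
      _ ≤ ‖u‖ * ‖f u‖ := h.trans (real_inner_le_norm u (f u))
      _ = ‖f u‖ * ‖u‖ := mul_comm _ _

theorem LipschitzWith.const_add {α E : Type*} [PseudoEMetricSpace α] [SeminormedAddCommGroup E]
    {K : NNReal} {f : α → E} (hf : LipschitzWith K f) (b : E) :
    LipschitzWith K fun x => b + f x := by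
  simpa [Function.comp_def] using (isometry_add_left b).lipschitz.comp hf

namespace Matrix

variable {ι : Type*} [Fintype ι] [DecidableEq ι]

theorem IsHermitian.mul_norm_sq_le_inner {M : Matrix ι ι ℝ} (hM : M.IsHermitian) {lam : ℝ}
    (hlam : ∀ i, lam ≤ hM.eigenvalues i) (u : EuclideanSpace ℝ ι) :
    lam * ‖u‖ ^ 2 ≤ ⟪u, toEuclideanCLM (𝕜 := ℝ) M u⟫ := by
  set B := hM.eigenvectorBasis
  have hrepr : ∀ i, B.repr (toEuclideanCLM (𝕜 := ℝ) M u) i = hM.eigenvalues i * B.repr u i := by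
    intro i
    have hBi : toEuclideanCLM (𝕜 := ℝ) M (B i) = hM.eigenvalues i • B i :=
      congrArg (WithLp.toLp 2) (hM.mulVec_eigenvectorBasis i)
    have hsym : ∀ a b, ⟪toEuclideanCLM (𝕜 := ℝ) M a, b⟫ = ⟪a, toEuclideanCLM (𝕜 := ℝ) M b⟫ :=
      isSymmetric_toEuclideanLin_iff.mpr hM
    rw [B.repr_apply_apply, B.repr_apply_apply, ← hsym]
    exact (congrArg (⟪·, u⟫) hBi).trans (real_inner_smul_left _ _ _)
  have hinner : ⟪u, toEuclideanCLM (𝕜 := ℝ) M u⟫ = ∑ i, hM.eigenvalues i * B.repr u i ^ 2 := by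
    rw [← B.repr.inner_map_map, PiLp.inner_apply]
    refine Finset.sum_congr rfl fun i _ => ?_
    rw [hrepr, RCLike.inner_apply, conj_trivial]
    ring
  have hnorm : ‖u‖ ^ 2 = ∑ i, B.repr u i ^ 2 := by
    rw [← B.repr.norm_map, EuclideanSpace.norm_sq_eq]
    simp only [Real.norm_eq_abs, sq_abs]
  rw [hinner, hnorm, Finset.mul_sum]
  exact Finset.sum_le_sum fun i _ => mul_le_mul_of_nonneg_right (hlam i) (sq_nonneg _)

theorem isUnit_of_mul_norm_sq_le_inner {M : Matrix ι ι ℝ} {μ : ℝ} (hμ : 0 < μ)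
    (h : ∀ u, μ * ‖u‖ ^ 2 ≤ ⟪u, toEuclideanCLM (𝕜 := ℝ) M u⟫) : IsUnit M := by
  have hinj : Function.Injective (toEuclideanCLM (𝕜 := ℝ) M) := by
    refine (injective_iff_map_eq_zero _).mpr fun u hu => norm_le_zero_iff.mp ?_
    have hμu := mul_norm_le_norm_of_mul_norm_sq_le_inner (h u)
    rw [hu, norm_zero] at hμu
    exact nonpos_of_mul_nonpos_right hμu hμ
  exact mulVec_injective_iff_isUnit.mp fun v w hvw =>
    congrArg WithLp.ofLp (hinj (congrArg (WithLp.toLp 2) hvw))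

theorem norm_toEuclideanCLM_inv_le {M : Matrix ι ι ℝ} {μ : ℝ} (hμ : 0 < μ)
    (h : ∀ u, μ * ‖u‖ ^ 2 ≤ ⟪u, toEuclideanCLM (𝕜 := ℝ) M u⟫) :
    ‖toEuclideanCLM (𝕜 := ℝ) M⁻¹‖ ≤ μ⁻¹ := by
  refine ContinuousLinearMap.opNorm_le_bound _ (inv_nonneg.mpr hμ.le) fun v => ?_
  have hMM : toEuclideanCLM (𝕜 := ℝ) M (toEuclideanCLM (𝕜 := ℝ) M⁻¹ v) = v := by
    have hdet := (isUnit_iff_isUnit_det M).mp (isUnit_of_mul_norm_sq_le_inner hμ h)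
    show WithLp.toLp 2 (M *ᵥ (M⁻¹ *ᵥ v.ofLp)) = v
    rw [mulVec_mulVec, mul_nonsing_inv _ hdet, one_mulVec]
  rw [le_inv_mul_iff₀ hμ, ← congrArg norm hMM]
  exact mul_norm_le_norm_of_mul_norm_sq_le_inner (h _)

theorem IsHermitian.mul_norm_sq_le_inner_add_smul_one {M : Matrix ι ι ℝ} (hM : M.IsHermitian)
    {lam : ℝ} (hlam : ∀ i, lam ≤ hM.eigenvalues i) (c : ℝ) (u : EuclideanSpace ℝ ι) :
    (lam + c) * ‖u‖ ^ 2 ≤ ⟪u, toEuclideanCLM (𝕜 := ℝ) (M + c • 1) u⟫ := by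
  rw [map_add, map_smul, map_one, _root_.add_apply, _root_.smul_apply, one_apply_eq_self,
    inner_add_right, inner_smul_right, real_inner_self_eq_norm_sq]
  linarith [hM.mul_norm_sq_le_inner hlam u]

end Matrix

theorem stmt_3_general (m n : ℕ) (A : Matrix (Fin m) (Fin n) ℝ)
    (y : EuclideanSpace ℝ (Fin m)) (σ γ L lammin : ℝ) (hγ : 0 < γ) (hL : 0 ≤ L)
    (hA : (Aᵀ * A : Matrix (Fin n) (Fin n) ℝ).IsHermitian)
    (hlam : lammin = ⨅ i, hA.eigenvalues i) (hlampos : 0 < lammin)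
    (D : EuclideanSpace ℝ (Fin n) → EuclideanSpace ℝ (Fin n))
    (hD : LipschitzWith (Real.toNNReal L) D)
    (hcontr : σ ^ 2 * L / (γ ^ 2 * lammin + σ ^ 2) < 1)
    (T : EuclideanSpace ℝ (Fin n) → EuclideanSpace ℝ (Fin n))
    (hT : ∀ x, T x = toE (((Aᵀ * A + (σ ^ 2 / γ ^ 2) • (1 : Matrix (Fin n) (Fin n) ℝ))⁻¹).mulVec
      (Aᵀ.mulVec y + (σ ^ 2 / γ ^ 2) • ofE (D x)))) :
    ∃ xstar : EuclideanSpace ℝ (Fin n), T xstar = xstar ∧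
      (∀ x, T x = x → x = xstar) ∧
      (∀ x0 : EuclideanSpace ℝ (Fin n),
        Filter.Tendsto (fun k => T^[k] x0) Filter.atTop (nhds xstar)) := by
  set c := σ ^ 2 / γ ^ 2 with hc
  set G := toEuclideanCLM (𝕜 := ℝ) (Aᵀ * A + c • 1)⁻¹
  have hG : ‖G‖ ≤ (lammin + c)⁻¹ := norm_toEuclideanCLM_inv_le (by positivity)
    (hA.mul_norm_sq_le_inner_add_smul_one
      (fun i => hlam ▸ ciInf_le (Set.finite_range _).bddBelow i) c)
  have hT_eq : T = fun x => G (WithLp.toLp 2 (Aᵀ *ᵥ y)) + (c • G) (D x) := by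
    funext x
    rw [hT x]
    simp only [toE, ofE, mulVec_add, mulVec_smul, WithLp.toLp_add, WithLp.toLp_smul]
    rfl
  have hTlip : LipschitzWith (‖c • G‖₊ * L.toNNReal) T := by
    rw [hT_eq]
    exact ((c • G).lipschitz.comp hD).const_add _
  have hK_lt_one : ‖c • G‖₊ * L.toNNReal < 1 := by
    rw [← NNReal.coe_lt_coe, NNReal.coe_mul, coe_nnnorm, Real.coe_toNNReal _ hL]
    calc ‖c • G‖ * L ≤ c * (lammin + c)⁻¹ * L := by
          rw [norm_smul, Real.norm_of_nonneg (by positivity)]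
          gcongr
      _ = σ ^ 2 * L / (γ ^ 2 * lammin + σ ^ 2) := by
          rw [hc]; field_simp
      _ < 1 := hcontr
  have hC : ContractingWith _ T := ⟨hK_lt_one, hTlip⟩
  exact ⟨hC.fixedPoint T, hC.fixedPoint_isFixedPt, fun x hx => hC.fixedPoint_unique hx,
    hC.tendsto_iterate_fixedPoint⟩

/-- If `λ_min > 0` is the smallest eigenvalue of `AᵀA` and `σ²L/(γ²λ_min + σ²) < 1` with `D`
`L`-Lipschitz, then `T(x) = (AᵀA + (σ²/γ²)I)⁻¹(Aᵀy + (σ²/γ²)D(x))` has a unique fixed point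
`x*` and the Picard iterates from any starting point converge to `x*`. -/
theorem stmt_3 (m n : ℕ) [NeZero n] (A : Matrix (Fin m) (Fin n) ℝ)
    (y : EuclideanSpace ℝ (Fin m)) (σ γ L lammin : ℝ) (hσ : 0 < σ) (hγ : 0 < γ) (hL : 0 ≤ L)
    (hA : (Aᵀ * A : Matrix (Fin n) (Fin n) ℝ).IsHermitian)
    (hlam : lammin = ⨅ i, hA.eigenvalues i) (hlampos : 0 < lammin)
    (D : EuclideanSpace ℝ (Fin n) → EuclideanSpace ℝ (Fin n))
    (hD : LipschitzWith (Real.toNNReal L) D)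
    (hcontr : σ ^ 2 * L / (γ ^ 2 * lammin + σ ^ 2) < 1)
    (T : EuclideanSpace ℝ (Fin n) → EuclideanSpace ℝ (Fin n))
    (hT : ∀ x, T x = toE (((Aᵀ * A + (σ ^ 2 / γ ^ 2) • (1 : Matrix (Fin n) (Fin n) ℝ))⁻¹).mulVec
      (Aᵀ.mulVec y + (σ ^ 2 / γ ^ 2) • ofE (D x)))) :
    ∃ xstar : EuclideanSpace ℝ (Fin n), T xstar = xstar ∧
      (∀ x, T x = x → x = xstar) ∧
      (∀ x0 : EuclideanSpace ℝ (Fin n),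
        Filter.Tendsto (fun k => T^[k] x0) Filter.atTop (nhds xstar)) :=
  stmt_3_general m n A y σ γ L lammin hγ hL hA hlam hlampos D hD hcontr T hT
end
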